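/- Let −∞ ≤ a < b ≤ ∞ and let I be one of the intervals (a,b), (a,b], [a,b), [a,b]. Let λ : I → ℂ and μ : I → ℝ be continuous with μ(t) ≥ 0 for all t ∈ I, and let A(t) be the upper-triangular matrix with diagonal entries λ(t), λ(t) and upper-right entry μ(t). Suppose that κ₂₁(t) := ∫_t^b (1 + ∫_t^s μ(τ) dτ) e^{−∫_t^s Re λ(τ) dτ} ds exists for all t ∈ I, that K₂₁ := sup_{t∈I} κ₂₁(t) < ∞, and that lim_{t→b⁻} ∫_{t₀}^t Re λ(s) ds = ∞ for t₀ ∈ (a,b). Then the system x' = A(t)x is Ulam stable on I (with respect to the maximum norm on ℂ²), and every Ulam constant K for x' = A(t)x on I satisfies K ≥ K₂₁. -/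

import Mathlib

open MeasureTheory Filter Set

noncomputable section

/-- Ulam stability on `I` with constant `K` for the system `x' = A(t) x` on `ℂ²`,
with respect to the maximum norm (the sup norm on `Fin 2 → ℂ`). -/
def UlamStable2C (I : Set ℝ) (A : ℝ → Matrix (Fin 2) (Fin 2) ℂ) (K : ℝ) : Prop :=
  0 < K ∧
  ∀ ε : ℝ, 0 < ε →
    ∀ φ φd : ℝ → Fin 2 → ℂ,
      (∀ t ∈ I, HasDerivWithinAt φ (φd t) I t) →
      ContinuousOn φd I →
      (∀ t ∈ I, ‖φd t - (A t).mulVec (φ t)‖ ≤ ε) →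
      ∃ x : ℝ → Fin 2 → ℂ,
        (∀ t ∈ I, HasDerivWithinAt x ((A t).mulVec (x t)) I t) ∧
        ∀ t ∈ I, ‖φ t - x t‖ ≤ K * ε

/-- `κ₂₁(t) = ∫_t^b (1 + ∫_t^s μ) exp(-∫_t^s Re λ) ds` for real nonnegative `μ`. -/
def kappa21r (b : EReal) (l : ℝ → ℂ) (m : ℝ → ℝ) (t : ℝ) : ℝ :=
  ∫ s in {s : ℝ | t < s ∧ (s : EReal) < b},
    (1 + ∫ τ in t..s, m τ) * Real.exp (-∫ τ in t..s, (l τ).re)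

/-!
With `L(t) = ∫_{t₀}^t λ` and `M(t) = ∫_{t₀}^t μ`, `Φ(t) = e^{L(t)} [[1, M(t)], [0, 1]]` is a
fundamental matrix of `x' = A(t) x`, and for `t ≤ s` the sup-norm of `Φ(t)Φ(s)⁻¹` is at most
`(1 + ∫_t^s μ) e^{-∫_t^s Re λ}`, the integrand of `κ₂₁(t)`.

If `φ` has defect `f = φ' - Aφ` of size at most `ε`, then `φ + Φ(t) ∫_t^b Φ(s)⁻¹ f(s) ds` is an
exact solution within `ε κ₂₁(t)` of `φ`; hence `sup κ₂₁` is an Ulam constant.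

Conversely, fix `t₁` as base point and force with `f = e^{i Im L} (1, -1)`, of norm one. Then
`φ = -Φ(t) ∫_t^b Φ(s)⁻¹ f(s) ds` is bounded by `sup κ₂₁` and its first entry at `t₁` is `-κ₂₁(t₁)`.
Every exact solution is `Φ(t) c`, and since `Re L → ∞` at `b`, the only one at bounded distance
from `φ` is `0`. So any Ulam constant is at least `‖φ(t₁)‖ ≥ κ₂₁(t₁)`.
-/

open Topology intervalIntegral Matrix

theorem exists_Icc_mem_nhdsWithin {I : Set ℝ} {t : ℝ} (ht : t ∈ I) :
    ∃ c ∈ I, ∃ d ∈ I, t ∈ Icc c d ∧ Icc c d ∈ 𝓝[I] t := by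
  have upper : ∃ d ∈ I, t ≤ d ∧ ∀ᶠ u in 𝓝[I] t, u ≤ d := by
    by_cases h : ∃ d ∈ I, t < d
    · obtain ⟨d, hd, htd⟩ := h
      exact ⟨d, hd, htd.le, eventually_nhdsWithin_of_eventually_nhds
        ((eventually_lt_nhds htd).mono fun _ => le_of_lt)⟩
    · push Not at h
      exact ⟨t, ht, le_rfl, eventually_nhdsWithin_of_forall h⟩
  have lower : ∃ c ∈ I, c ≤ t ∧ ∀ᶠ u in 𝓝[I] t, c ≤ u := by
    by_cases h : ∃ c ∈ I, c < t
    · obtain ⟨c, hc, hct⟩ := h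
      exact ⟨c, hc, hct.le, eventually_nhdsWithin_of_eventually_nhds
        ((eventually_gt_nhds hct).mono fun _ => le_of_lt)⟩
    · push Not at h
      exact ⟨t, ht, le_rfl, eventually_nhdsWithin_of_forall h⟩
  obtain ⟨d, hd, htd, hud⟩ := upper
  obtain ⟨c, hc, hct, hcu⟩ := lower
  exact ⟨c, hc, d, hd, ⟨hct, htd⟩, hcu.and hud⟩

namespace Set.OrdConnected

variable {I : Set ℝ} {t : ℝ}

variable {E : Type*} [NormedAddCommGroup E] [NormedSpace ℝ E]

theorem hasDerivWithinAt_integral [CompleteSpace E] (hI : I.OrdConnected) {g : ℝ → E}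
    (hg : ContinuousOn g I) {t₀ : ℝ} (ht₀ : t₀ ∈ I) (ht : t ∈ I) :
    HasDerivWithinAt (fun u => ∫ x in t₀..u, g x) (g t) I t := by
  obtain ⟨c, hc, d, hd, htcd, hnhds⟩ := exists_Icc_mem_nhdsWithin ht
  have hgcd : ContinuousOn g (Icc c d) := hg.mono (hI.out hc hd)
  have : Fact (t ∈ Icc c d) := ⟨htcd⟩
  exact (integral_hasDerivWithinAt_right (hg.mono (hI.uIcc_subset ht₀ ht)).intervalIntegrable
    (hgcd.stronglyMeasurableAtFilter_nhdsWithin measurableSet_Icc t)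
    (hgcd t htcd)).mono_of_mem_nhdsWithin hnhds

theorem continuousOn_integral [CompleteSpace E] (hI : I.OrdConnected) {g : ℝ → E}
    (hg : ContinuousOn g I) {t₀ : ℝ} (ht₀ : t₀ ∈ I) :
    ContinuousOn (fun u => ∫ x in t₀..u, g x) I := fun _ ht =>
  (hI.hasDerivWithinAt_integral hg ht₀ ht).continuousWithinAt

theorem eq_of_hasDerivWithinAt_zero (hI : I.OrdConnected) {f : ℝ → E}
    (hf : ∀ t ∈ I, HasDerivWithinAt f 0 I t) {t₀ : ℝ} (ht₀ : t₀ ∈ I) (ht : t ∈ I) :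
    f t = f t₀ := by
  simpa [sub_eq_zero] using
    Convex.norm_image_sub_le_of_norm_hasDerivWithin_le hf (fun _ _ => norm_zero.le) hI.convex ht₀ ht

end Set.OrdConnected

def realIoo (t : ℝ) (b : EReal) : Set ℝ := {s : ℝ | t < s ∧ (s : EReal) < b}

section realIoo

variable {E : Type*} [NormedAddCommGroup E] [NormedSpace ℝ E] {b : EReal} {g : ℝ → E}
  {t u : ℝ}

theorem measurableSet_realIoo : MeasurableSet (realIoo t b) :=
  measurableSet_Ioi.inter (measurableSet_Iio.preimage continuous_coe_real_ereal.measurable)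

theorem realIoo_subset_realIoo (h : t ≤ u) : realIoo u b ⊆ realIoo t b :=
  fun _ hs => ⟨h.trans_lt hs.1, hs.2⟩

theorem realIoo_diff_ae_eq (hub : (u : EReal) ≤ b) :
    (realIoo t b \ realIoo u b : Set ℝ) =ᵐ[volume] Ioc t u := by
  rw [ae_eq_set]
  constructor
  · refine measure_mono_null (fun s hs => ?_) measure_empty
    exact hs.2 ⟨hs.1.1.1, not_lt.1 fun hus => hs.1.2 ⟨hus, hs.1.1.2⟩⟩
  · refine measure_mono_null (fun s hs => ?_) (measure_singleton u)
    by_contra hsu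
    have hsu : s < u := lt_of_le_of_ne hs.1.2 hsu
    exact hs.2 ⟨⟨hs.1.1, (EReal.coe_lt_coe_iff.2 hsu).trans_le hub⟩, fun h => h.1.not_gt hsu⟩

theorem setIntegral_realIoo_eq_add (htu : t ≤ u) (hub : (u : EReal) ≤ b)
    (hg : IntegrableOn g (realIoo t b)) :
    ∫ s in realIoo t b, g s = (∫ s in t..u, g s) + ∫ s in realIoo u b, g s := by
  rw [integral_of_le htu, ← setIntegral_congr_set (realIoo_diff_ae_eq hub),
    setIntegral_sdiff measurableSet_realIoo hg (realIoo_subset_realIoo htu), sub_add_cancel]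

theorem setIntegral_realIoo_eq_sub (hu : (u : EReal) ≤ b) (ht : (t : EReal) ≤ b)
    (hgu : IntegrableOn g (realIoo u b)) (hgt : IntegrableOn g (realIoo t b)) :
    ∫ s in realIoo u b, g s = (∫ s in realIoo t b, g s) - ∫ s in t..u, g s := by
  rcases le_total t u with htu | hut
  · rw [setIntegral_realIoo_eq_add htu hu hgt, add_sub_cancel_left]
  · rw [setIntegral_realIoo_eq_add hut ht hgu, integral_symm, neg_add_eq_sub]

theorem Set.OrdConnected.hasDerivWithinAt_setIntegral_realIoo [CompleteSpace E] {I : Set ℝ}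
    (hI : I.OrdConnected) (hIb : ∀ t ∈ I, (t : EReal) ≤ b) (hg : ContinuousOn g I)
    (hgi : ∀ t ∈ I, IntegrableOn g (realIoo t b)) (ht : t ∈ I) :
    HasDerivWithinAt (fun u => ∫ s in realIoo u b, g s) (-g t) I t := by
  have key : ∀ u ∈ I, ∫ s in realIoo u b, g s = (∫ s in realIoo t b, g s) - ∫ s in t..u, g s :=
    fun u hu => setIntegral_realIoo_eq_sub (hIb u hu) (hIb t ht) (hgi u hu) (hgi t ht)
  exact ((hI.hasDerivWithinAt_integral hg ht ht).const_sub _).congr key (key t ht)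

end realIoo

/-- A fundamental matrix of `x' = [[L', M'], [0, L']] x`, with inverse `fundamental (-L) (-M) t`. -/
def fundamental (L M : ℝ → ℂ) (t : ℝ) : (Fin 2 → ℂ) →L[ℂ] (Fin 2 → ℂ) :=
  Complex.exp (L t) • LinearMap.toContinuousLinearMap (Matrix.toLin' !![1, M t; 0, 1])

section fundamental

variable {L M L' M' : ℝ → ℂ} {t s : ℝ} {v : Fin 2 → ℂ}

theorem fundamental_apply : fundamental L M t v = Complex.exp (L t) • ![v 0 + M t * v 1, v 1] := by
  funext i
  fin_cases i <;> simp [fundamental, vecHead, vecTail]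

theorem fundamental_apply_fundamental :
    fundamental L M t (fundamental L' M' s v)
      = Complex.exp (L t + L' s) • ![v 0 + (M t + M' s) * v 1, v 1] := by
  funext i
  fin_cases i <;> simp [fundamental_apply, Complex.exp_add] <;> ring

theorem fundamental_apply_fundamental_neg_self :
    fundamental L M t (fundamental (-L) (-M) t v) = v := by
  funext i
  fin_cases i <;> simp [fundamental_apply_fundamental]

theorem fundamental_neg_apply_fundamental_self :
    fundamental (-L) (-M) t (fundamental L M t v) = v := by
  funext i
  fin_cases i <;> simp [fundamental_apply_fundamental]

theorem fundamental_apply_mulVec (a c : ℂ) :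
    fundamental L M t (!![a, c; 0, a] *ᵥ v) = !![a, c; 0, a] *ᵥ fundamental L M t v := by
  funext i
  fin_cases i <;> simp [fundamental_apply, vecHead, vecTail] <;> ring

theorem norm_fundamental_apply_fundamental_neg_le {ε : ℝ} (hv : ‖v‖ ≤ ε) :
    ‖fundamental L M t (fundamental (-L) (-M) s v)‖
      ≤ ε * (Real.exp (L t - L s).re * (1 + ‖M t - M s‖)) := by
  have h0 : ‖v 0‖ ≤ ε := (norm_le_pi_norm v 0).trans hv
  have h1 : ‖v 1‖ ≤ ε := (norm_le_pi_norm v 1).trans hv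
  have hε : 0 ≤ ε := (norm_nonneg v).trans hv
  rw [fundamental_apply_fundamental, norm_smul, Complex.norm_exp, Pi.neg_apply, Pi.neg_apply,
    ← sub_eq_add_neg, ← sub_eq_add_neg, mul_left_comm]
  refine mul_le_mul_of_nonneg_left ((pi_norm_le_iff_of_nonneg (by positivity)).2 fun i => ?_)
    (Real.exp_pos _).le
  fin_cases i
  · calc ‖v 0 + (M t - M s) * v 1‖ ≤ ‖v 0‖ + ‖M t - M s‖ * ‖v 1‖ := by
          rw [← norm_mul]; exact norm_add_le _ _
      _ ≤ ε * (1 + ‖M t - M s‖) := by nlinarith [norm_nonneg (M t - M s)]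
  · simpa using h1.trans (le_mul_of_one_le_right hε (by simp))

theorem eq_zero_of_forall_norm_fundamental_apply_le {S : Set ℝ} {C : ℝ}
    (hL : ∀ B, ∃ t ∈ S, B ≤ (L t).re) (hC : ∀ t ∈ S, ‖fundamental L M t v‖ ≤ C) : v = 0 := by
  have scalar : ∀ z : ℂ, (∀ t ∈ S, ‖Complex.exp (L t) * z‖ ≤ C) → z = 0 := by
    intro z hz
    by_contra hz0
    have hpos : 0 < ‖z‖ := norm_pos_iff.2 hz0
    obtain ⟨t, ht, hBt⟩ := hL (C / ‖z‖)
    have := hz t ht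
    rw [norm_mul, Complex.norm_exp] at this
    have hexp := Real.add_one_le_exp (L t).re
    have : C / ‖z‖ * ‖z‖ = C := div_mul_cancel₀ C hpos.ne'
    nlinarith
  have hcomp : ∀ t ∈ S, ∀ i, ‖fundamental L M t v i‖ ≤ C := fun t ht i =>
    (norm_le_pi_norm _ i).trans (hC t ht)
  have h1 : v 1 = 0 := scalar _ fun t ht => by simpa [fundamental_apply] using hcomp t ht 1
  have h0 : v 0 = 0 := scalar _ fun t ht => by simpa [fundamental_apply, h1] using hcomp t ht 0
  funext i
  fin_cases i <;> assumption

theorem ContinuousOn.fundamental_apply {S : Set ℝ} {p : ℝ → Fin 2 → ℂ} (hL : ContinuousOn L S)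
    (hM : ContinuousOn M S) (hp : ContinuousOn p S) :
    ContinuousOn (fun u => fundamental L M u (p u)) S := by
  simp only [_root_.fundamental_apply]
  refine hL.cexp.smul (continuousOn_pi.2 fun i => ?_)
  have hp0 := (continuous_apply 0).comp_continuousOn hp
  have hp1 := (continuous_apply 1).comp_continuousOn hp
  fin_cases i
  · exact hp0.add (hM.mul hp1)
  · exact hp1

theorem ContinuousOn.triangular_mulVec {S : Set ℝ} {a c : ℝ → ℂ} {p : ℝ → Fin 2 → ℂ}
    (ha : ContinuousOn a S) (hc : ContinuousOn c S) (hp : ContinuousOn p S) :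
    ContinuousOn (fun u => !![a u, c u; 0, a u] *ᵥ p u) S := by
  have hp0 := (continuous_apply 0).comp_continuousOn hp
  have hp1 := (continuous_apply 1).comp_continuousOn hp
  simp only [mulVec_fin_two, of_apply, cons_val', cons_val_zero, cons_val_one, empty_val',
    cons_val_fin_one, zero_mul, zero_add]
  refine continuousOn_pi.2 fun i => ?_
  fin_cases i
  · exact (ha.mul hp0).add (hc.mul hp1)
  · exact ha.mul hp1

theorem HasDerivWithinAt.fundamental_apply {S : Set ℝ} {a c : ℂ} {p : ℝ → Fin 2 → ℂ}
    {p' : Fin 2 → ℂ} (hL : HasDerivWithinAt L a S t) (hM : HasDerivWithinAt M c S t)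
    (hp : HasDerivWithinAt p p' S t) :
    HasDerivWithinAt (fun u => fundamental L M u (p u))
      (!![a, c; 0, a] *ᵥ fundamental L M t (p t) + fundamental L M t p') S t := by
  simp only [_root_.fundamental_apply]
  have hp0 := hasDerivWithinAt_pi.1 hp 0
  have hp1 := hasDerivWithinAt_pi.1 hp 1
  refine hasDerivWithinAt_pi.2 fun i => ?_
  fin_cases i
  · refine (hL.cexp.mul (hp0.add (hM.mul hp1))).congr_deriv ?_
    simp [vecHead, vecTail]
    ring
  · refine (hL.cexp.mul hp1).congr_deriv ?_
    simp [vecHead, vecTail]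
    ring

end fundamental

def tailSolution (L M : ℝ → ℂ) (b : EReal) (f : ℝ → Fin 2 → ℂ) (t : ℝ) : Fin 2 → ℂ :=
  fundamental L M t (∫ s in realIoo t b, fundamental (-L) (-M) s (f s))

section tailSolution

variable {L M : ℝ → ℂ} {b : EReal} {f : ℝ → Fin 2 → ℂ} {t : ℝ}

theorem tailSolution_eq_integral
    (hf : IntegrableOn (fun s => fundamental (-L) (-M) s (f s)) (realIoo t b)) :
    tailSolution L M b f t
      = ∫ s in realIoo t b, fundamental L M t (fundamental (-L) (-M) s (f s)) :=
  ((fundamental L M t).integral_comp_comm hf).symm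

variable {ε : ℝ} (hL : ContinuousOn L (realIoo t b)) (hM : ContinuousOn M (realIoo t b))
  (hf : ContinuousOn f (realIoo t b)) (hfε : ∀ s ∈ realIoo t b, ‖f s‖ ≤ ε)
  (hk : IntegrableOn (fun s => Real.exp (L t - L s).re * (1 + ‖M t - M s‖)) (realIoo t b))
include hL hM hf hfε hk

theorem integrableOn_fundamental_neg_apply :
    IntegrableOn (fun s => fundamental (-L) (-M) s (f s)) (realIoo t b) := by
  have hmeas : AEStronglyMeasurable (fun s => fundamental L M t (fundamental (-L) (-M) s (f s)))
      (volume.restrict (realIoo t b)) :=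
    ((fundamental L M t).continuous.comp_continuousOn
      (hL.neg.fundamental_apply hM.neg hf)).aestronglyMeasurable measurableSet_realIoo
  have hint : IntegrableOn (fun s => fundamental L M t (fundamental (-L) (-M) s (f s)))
      (realIoo t b) :=
    (hk.const_mul ε).mono' hmeas <| (ae_restrict_iff' measurableSet_realIoo).2 <|
      ae_of_all _ fun s hs => norm_fundamental_apply_fundamental_neg_le (hfε s hs)
  have := (fundamental (-L) (-M) t).integrable_comp hint
  simp only [fundamental_neg_apply_fundamental_self] at this
  exact this

theorem norm_tailSolution_le :
    ‖tailSolution L M b f t‖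
      ≤ ε * ∫ s in realIoo t b, Real.exp (L t - L s).re * (1 + ‖M t - M s‖) := by
  rw [tailSolution_eq_integral (integrableOn_fundamental_neg_apply hL hM hf hfε hk),
    ← MeasureTheory.integral_const_mul]
  exact norm_integral_le_of_norm_le (hk.const_mul ε) <|
    (ae_restrict_iff' measurableSet_realIoo).2 <|
      ae_of_all _ fun s hs => norm_fundamental_apply_fundamental_neg_le (hfε s hs)

end tailSolution

namespace Set.OrdConnected

variable {I : Set ℝ} (hI : I.OrdConnected) {L M : ℝ → ℂ} {a c : ℝ → ℂ}
  (hL : ∀ t ∈ I, HasDerivWithinAt L (a t) I t) (hM : ∀ t ∈ I, HasDerivWithinAt M (c t) I t)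
include hI hL hM

theorem hasDerivWithinAt_tailSolution {b : EReal} (hIb : ∀ t ∈ I, (t : EReal) ≤ b)
    {f : ℝ → Fin 2 → ℂ} (hf : ContinuousOn f I)
    (hfi : ∀ t ∈ I, IntegrableOn (fun s => fundamental (-L) (-M) s (f s)) (realIoo t b))
    {t : ℝ} (ht : t ∈ I) :
    HasDerivWithinAt (tailSolution L M b f)
      (!![a t, c t; 0, a t] *ᵥ tailSolution L M b f t - f t) I t := by
  have hLc : ContinuousOn L I := fun t ht => (hL t ht).continuousWithinAt
  have hMc : ContinuousOn M I := fun t ht => (hM t ht).continuousWithinAt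
  refine ((hL t ht).fundamental_apply (hM t ht) (hI.hasDerivWithinAt_setIntegral_realIoo hIb
    (hLc.neg.fundamental_apply hMc.neg hf) hfi ht)).congr_deriv ?_
  rw [map_neg, fundamental_apply_fundamental_neg_self, ← sub_eq_add_neg]
  rfl

theorem eq_fundamental_apply_of_hasDerivWithinAt {x : ℝ → Fin 2 → ℂ}
    (hx : ∀ t ∈ I, HasDerivWithinAt x (!![a t, c t; 0, a t] *ᵥ x t) I t) {t₀ t : ℝ}
    (ht₀ : t₀ ∈ I) (ht : t ∈ I) :
    x t = fundamental L M t (fundamental (-L) (-M) t₀ (x t₀)) := by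
  have hconst : ∀ u ∈ I, HasDerivWithinAt (fun u => fundamental (-L) (-M) u (x u)) 0 I u := by
    intro u hu
    refine ((hL u hu).neg.fundamental_apply (hM u hu).neg (hx u hu)).congr_deriv ?_
    rw [fundamental_apply_mulVec]
    funext i
    fin_cases i <;> simp; ring
  rw [← hI.eq_of_hasDerivWithinAt_zero hconst ht₀ ht, fundamental_apply_fundamental_neg_self]

end Set.OrdConnected

/-- For `L t₀ = 0`, `Φ(t₀)Φ(s)⁻¹` maps this unit vector to one whose first entry is the integrand
of `kappa21r` at `t₀`: the bound of `tailSolution` by `kappa21r` is attained at `t₀`. -/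
def extremalPerturbation (L : ℝ → ℂ) (s : ℝ) : Fin 2 → ℂ :=
  Complex.exp (L s - (L s).re) • ![1, -1]

theorem norm_extremalPerturbation (L : ℝ → ℂ) (s : ℝ) : ‖extremalPerturbation L s‖ = 1 := by
  rw [extremalPerturbation, norm_smul, Complex.norm_exp, Complex.sub_re, Complex.ofReal_re,
    sub_self, Real.exp_zero, one_mul]
  simp [Pi.norm_def, Fin.univ_succ]

theorem ContinuousOn.extremalPerturbation {S : Set ℝ} {L : ℝ → ℂ} (hL : ContinuousOn L S) :
    ContinuousOn (extremalPerturbation L) S :=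
  (hL.sub (Complex.continuous_ofReal.comp_continuousOn
    (Complex.continuous_re.comp_continuousOn hL))).cexp.smul continuousOn_const

theorem exists_le_re_integral_of_tendsto {a b : EReal} {I : Set ℝ} {l : ℝ → ℂ}
    (hI1 : ∀ x : ℝ, a < (x : EReal) → (x : EReal) < b → x ∈ I) (hI : I.OrdConnected)
    (hl : ContinuousOn l I) {t₀ : ℝ} (hat₀ : a < (t₀ : EReal)) (ht₀b : (t₀ : EReal) < b)
    (hlim : Tendsto (fun t => ∫ s in t₀..t, (l s).re)
      (comap (fun x : ℝ => (x : EReal)) (𝓝[<] b)) atTop)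
    {t₁ : ℝ} (ht₁ : t₁ ∈ I) (B : ℝ) : ∃ t ∈ I, B ≤ (∫ τ in t₁..t, l τ).re := by
  have hne : (comap (fun x : ℝ => (x : EReal)) (𝓝[<] b)).NeBot := comap_neBot fun U hU => by
    obtain ⟨y, hy, hyU⟩ := (mem_nhdsLT_iff_exists_Ioo_subset' ht₀b).1 hU
    obtain ⟨q, hyq, hqb⟩ := EReal.exists_rat_btwn_of_lt hy
    exact ⟨q, hyU ⟨hyq, hqb⟩⟩
  have hmem : ∀ᶠ t in comap (fun x : ℝ => (x : EReal)) (𝓝[<] b), t ∈ I := by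
    filter_upwards [preimage_mem_comap (Ioo_mem_nhdsLT ht₀b)] with t ht
    exact hI1 t (hat₀.trans ht.1) ht.2
  have hre : ∀ {u v}, u ∈ I → v ∈ I → IntervalIntegrable (fun τ => (l τ).re) volume u v :=
    fun hu hv => ((Complex.continuous_re.comp_continuousOn hl).mono
      (hI.uIcc_subset hu hv)).intervalIntegrable
  have ht₀ : t₀ ∈ I := hI1 t₀ hat₀ ht₀b
  obtain ⟨t, ht, hBt⟩ :=
    (hmem.and (hlim.eventually_ge_atTop (B - ∫ τ in t₁..t₀, (l τ).re))).exists
  refine ⟨t, ht, ?_⟩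
  have hLre : (∫ τ in t₁..t, l τ).re = ∫ τ in t₁..t, (l τ).re :=
    (intervalIntegral_re ((hl.mono (hI.uIcc_subset ht₁ ht)).intervalIntegrable)).symm
  rw [hLre, ← integral_add_adjacent_intervals (hre ht₁ ht₀) (hre ht₀ ht)]
  linarith

theorem ordConnected_of_forall_ereal {a b : EReal} {I : Set ℝ}
    (hI1 : ∀ x : ℝ, a < (x : EReal) → (x : EReal) < b → x ∈ I)
    (hI2 : ∀ x ∈ I, a ≤ (x : EReal) ∧ (x : EReal) ≤ b) : I.OrdConnected := by
  refine ⟨fun x hx y hy z hz => ?_⟩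
  rcases hz.1.eq_or_lt with rfl | hxz
  · exact hx
  rcases hz.2.eq_or_lt with rfl | hzy
  · exact hy
  exact hI1 z ((hI2 x hx).1.trans_lt (EReal.coe_lt_coe_iff.2 hxz))
    ((EReal.coe_lt_coe_iff.2 hzy).trans_le (hI2 y hy).2)

theorem realIoo_subset_of_forall_ereal {a b : EReal} {I : Set ℝ}
    (hI1 : ∀ x : ℝ, a < (x : EReal) → (x : EReal) < b → x ∈ I)
    (hI2 : ∀ x ∈ I, a ≤ (x : EReal) ∧ (x : EReal) ≤ b) {t : ℝ} (ht : t ∈ I) :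
    realIoo t b ⊆ I := fun s hs =>
  hI1 s ((hI2 t ht).1.trans_lt (EReal.coe_lt_coe_iff.2 hs.1)) hs.2

section TriangularSystem

variable {I : Set ℝ} {b : EReal} {l : ℝ → ℂ} {m : ℝ → ℝ} {t₀ t : ℝ}
  (hI : I.OrdConnected) (hIb : ∀ t ∈ I, (t : EReal) ≤ b) (hIoo : ∀ t ∈ I, realIoo t b ⊆ I)
  (hl : ContinuousOn l I) (hm : ContinuousOn m I) (hm0 : ∀ t ∈ I, 0 ≤ m t)
  (hker : ∀ t ∈ I, IntegrableOn
    (fun s => (1 + ∫ τ in t..s, m τ) * Real.exp (-∫ τ in t..s, (l τ).re)) (realIoo t b))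
  (ht₀ : t₀ ∈ I)

include hI hIoo hl hm hm0 ht₀ in
theorem eqOn_kappa21r_integrand (ht : t ∈ I) :
    EqOn (fun s => Real.exp ((∫ τ in t₀..t, l τ) - ∫ τ in t₀..s, l τ).re
        * (1 + ‖(∫ τ in t₀..t, (m τ : ℂ)) - ∫ τ in t₀..s, (m τ : ℂ)‖))
      (fun s => (1 + ∫ τ in t..s, m τ) * Real.exp (-∫ τ in t..s, (l τ).re)) (realIoo t b) := by
  intro s hs
  have hs' : s ∈ I := hIoo t ht hs
  have hlint : ∀ {u v}, u ∈ I → v ∈ I → IntervalIntegrable l volume u v := fun hu hv =>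
    (hl.mono (hI.uIcc_subset hu hv)).intervalIntegrable
  have hmint : ∀ {u v}, u ∈ I → v ∈ I → IntervalIntegrable (fun τ => (m τ : ℂ)) volume u v :=
    fun hu hv => ((Complex.continuous_ofReal.comp_continuousOn hm).mono
      (hI.uIcc_subset hu hv)).intervalIntegrable
  have hL : (∫ τ in t₀..t, l τ) - ∫ τ in t₀..s, l τ = -∫ τ in t..s, l τ := by
    rw [integral_interval_sub_left (hlint ht₀ ht) (hlint ht₀ hs'), integral_symm]
  have hM : (∫ τ in t₀..t, (m τ : ℂ)) - ∫ τ in t₀..s, (m τ : ℂ)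
      = -((∫ τ in t..s, m τ : ℝ) : ℂ) := by
    rw [integral_interval_sub_left (hmint ht₀ ht) (hmint ht₀ hs'), integral_symm, integral_ofReal]
  have hre : (∫ τ in t..s, l τ).re = ∫ τ in t..s, (l τ).re :=
    (intervalIntegral_re (hlint ht hs')).symm
  have hm_nonneg : 0 ≤ ∫ τ in t..s, m τ :=
    integral_nonneg hs.1.le fun u hu => hm0 u (hI.out ht hs' hu)
  dsimp only
  rw [hL, hM, Complex.neg_re, hre, norm_neg, Complex.norm_real, Real.norm_of_nonneg hm_nonneg,
    mul_comm]

variable {f : ℝ → Fin 2 → ℂ} {ε : ℝ} (hf : ContinuousOn f I) (hfε : ∀ s ∈ I, ‖f s‖ ≤ ε)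

include hI hIoo hl hm hm0 hker ht₀ hf hfε in
theorem integrableOn_fundamental_neg_apply_of_mem (ht : t ∈ I) :
    IntegrableOn (fun s => fundamental (-fun u => ∫ τ in t₀..u, l τ)
      (-fun u => ∫ τ in t₀..u, (m τ : ℂ)) s (f s)) (realIoo t b) :=
  integrableOn_fundamental_neg_apply ((hI.continuousOn_integral hl ht₀).mono (hIoo t ht))
    ((hI.continuousOn_integral (Complex.continuous_ofReal.comp_continuousOn hm) ht₀).mono
      (hIoo t ht))
    (hf.mono (hIoo t ht)) (fun s hs => hfε s (hIoo t ht hs))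
    ((hker t ht).congr_fun (eqOn_kappa21r_integrand hI hIoo hl hm hm0 ht₀ ht).symm
      measurableSet_realIoo)

include hI hIoo hl hm hm0 hker ht₀ hf hfε in
theorem norm_tailSolution_le_kappa21r (ht : t ∈ I) :
    ‖tailSolution (fun u => ∫ τ in t₀..u, l τ) (fun u => ∫ τ in t₀..u, (m τ : ℂ)) b f t‖
      ≤ ε * kappa21r b l m t := by
  refine (norm_tailSolution_le ((hI.continuousOn_integral hl ht₀).mono (hIoo t ht))
    ((hI.continuousOn_integral (Complex.continuous_ofReal.comp_continuousOn hm) ht₀).mono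
      (hIoo t ht))
    (hf.mono (hIoo t ht)) (fun s hs => hfε s (hIoo t ht hs))
    ((hker t ht).congr_fun (eqOn_kappa21r_integrand hI hIoo hl hm hm0 ht₀ ht).symm
      measurableSet_realIoo)).trans_eq ?_
  exact congrArg (ε * ·)
    (setIntegral_congr_fun measurableSet_realIoo (eqOn_kappa21r_integrand hI hIoo hl hm hm0 ht₀ ht))

include hI hIb hIoo hl hm hm0 hker ht₀ hf hfε in
theorem hasDerivWithinAt_tailSolution_of_mem (ht : t ∈ I) :
    HasDerivWithinAt
      (tailSolution (fun u => ∫ τ in t₀..u, l τ) (fun u => ∫ τ in t₀..u, (m τ : ℂ)) b f)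
      (!![l t, (m t : ℂ); 0, l t] *ᵥ
        tailSolution (fun u => ∫ τ in t₀..u, l τ) (fun u => ∫ τ in t₀..u, (m τ : ℂ)) b f t
        - f t) I t :=
  hI.hasDerivWithinAt_tailSolution (fun _ hu => hI.hasDerivWithinAt_integral hl ht₀ hu)
    (fun _ hu => hI.hasDerivWithinAt_integral (Complex.continuous_ofReal.comp_continuousOn hm)
      ht₀ hu) hIb hf
    (fun _ hu => integrableOn_fundamental_neg_apply_of_mem hI hIoo hl hm hm0 hker ht₀ hf hfε hu) ht

include hI hIb hIoo hl hm hm0 hker ht₀ in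
theorem exists_solution_norm_sub_le {ε : ℝ} {φ φd : ℝ → Fin 2 → ℂ}
    (hφ : ∀ t ∈ I, HasDerivWithinAt φ (φd t) I t) (hφd : ContinuousOn φd I)
    (hε : ∀ t ∈ I, ‖φd t - !![l t, (m t : ℂ); 0, l t] *ᵥ φ t‖ ≤ ε) :
    ∃ x : ℝ → Fin 2 → ℂ, (∀ t ∈ I, HasDerivWithinAt x (!![l t, (m t : ℂ); 0, l t] *ᵥ x t) I t) ∧
      ∀ t ∈ I, ‖φ t - x t‖ ≤ ε * kappa21r b l m t := by
  have hf : ContinuousOn (fun t => φd t - !![l t, (m t : ℂ); 0, l t] *ᵥ φ t) I :=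
    hφd.sub (hl.triangular_mulVec (Complex.continuous_ofReal.comp_continuousOn hm)
      fun t ht => (hφ t ht).continuousWithinAt)
  refine ⟨φ + tailSolution (fun u => ∫ τ in t₀..u, l τ) (fun u => ∫ τ in t₀..u, (m τ : ℂ)) b
    (fun t => φd t - !![l t, (m t : ℂ); 0, l t] *ᵥ φ t), fun t ht => ?_, fun t ht => ?_⟩
  · refine ((hφ t ht).add (hasDerivWithinAt_tailSolution_of_mem hI hIb hIoo hl hm hm0 hker ht₀
      hf hε ht)).congr_deriv ?_
    rw [Pi.add_apply, mulVec_add]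
    abel
  · simpa using norm_tailSolution_le_kappa21r hI hIoo hl hm hm0 hker ht₀ hf hε ht

include hI hIoo hl hm hm0 hker in
theorem tailSolution_extremalPerturbation_apply_zero (ht₀ : t₀ ∈ I) :
    tailSolution (fun u => ∫ τ in t₀..u, l τ) (fun u => ∫ τ in t₀..u, (m τ : ℂ)) b
      (extremalPerturbation fun u => ∫ τ in t₀..u, l τ) t₀ 0 = kappa21r b l m t₀ := by
  have hint := integrableOn_fundamental_neg_apply_of_mem hI hIoo hl hm hm0 hker ht₀
    (hI.continuousOn_integral hl ht₀).extremalPerturbation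
    (fun s _ => (norm_extremalPerturbation _ s).le) ht₀
  rw [tailSolution_eq_integral hint,
    eval_integral (fun i => ((fundamental _ _ t₀).integrable_comp hint).eval i), kappa21r,
    ← integral_complex_ofReal]
  refine setIntegral_congr_fun measurableSet_realIoo fun s hs => ?_
  have hre : (∫ τ in t₀..s, l τ).re = ∫ τ in t₀..s, (l τ).re :=
    (intervalIntegral_re ((hl.mono (hI.uIcc_subset ht₀ (hIoo t₀ ht₀ hs))).intervalIntegrable)).symm
  have hexp : Complex.exp (-∫ τ in t₀..s, l τ)
      * Complex.exp ((∫ τ in t₀..s, l τ) - (∫ τ in t₀..s, l τ).re)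
      = (Real.exp (-∫ τ in t₀..s, (l τ).re) : ℂ) := by
    rw [← Complex.exp_add, Complex.ofReal_exp, ← hre]
    push_cast
    ring_nf
  simp only [fundamental_apply_fundamental, extremalPerturbation, integral_same, Pi.neg_apply,
    zero_add, Pi.smul_apply, smul_eq_mul, cons_val_zero, cons_val_one, cons_val_fin_one,
    intervalIntegral.integral_ofReal, Complex.ofReal_zero]
  push_cast at hexp ⊢
  linear_combination (1 + ((∫ τ in t₀..s, m τ : ℝ) : ℂ)) * hexp

include hI hl hm in
theorem eq_zero_of_hasDerivWithinAt_of_norm_le {t₁ : ℝ} (ht₁ : t₁ ∈ I)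
    (hunbdd : ∀ B, ∃ t ∈ I, B ≤ (∫ τ in t₁..t, l τ).re) {x : ℝ → Fin 2 → ℂ}
    (hx : ∀ t ∈ I, HasDerivWithinAt x (!![l t, (m t : ℂ); 0, l t] *ᵥ x t) I t) {C : ℝ}
    (hC : ∀ t ∈ I, ‖x t‖ ≤ C) (ht : t ∈ I) : x t = 0 := by
  obtain ⟨c, hc⟩ : ∃ c, ∀ t ∈ I, x t = fundamental (fun u => ∫ τ in t₁..u, l τ)
      (fun u => ∫ τ in t₁..u, (m τ : ℂ)) t c :=
    ⟨_, fun t ht => hI.eq_fundamental_apply_of_hasDerivWithinAt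
      (fun _ hu => hI.hasDerivWithinAt_integral hl ht₁ hu)
      (fun _ hu => hI.hasDerivWithinAt_integral (Complex.continuous_ofReal.comp_continuousOn hm)
        ht₁ hu) hx ht₁ ht⟩
  have hc0 : c = 0 := eq_zero_of_forall_norm_fundamental_apply_le hunbdd fun t ht => by
    rw [← hc t ht]
    exact hC t ht
  rw [hc t ht, hc0, map_zero]

include hI hIb hIoo hl hm hm0 hker in
theorem kappa21r_le_of_ulamStable {t₁ : ℝ} (ht₁ : t₁ ∈ I)
    (hunbdd : ∀ B, ∃ t ∈ I, B ≤ (∫ τ in t₁..t, l τ).re) {S : ℝ}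
    (hS : ∀ t ∈ I, kappa21r b l m t ≤ S) {K : ℝ}
    (hK : UlamStable2C I (fun t => !![l t, (m t : ℂ); 0, l t]) K) :
    kappa21r b l m t₁ ≤ K := by
  have hLc : ContinuousOn (fun u => ∫ τ in t₁..u, l τ) I := hI.continuousOn_integral hl ht₁
  have hf := hLc.extremalPerturbation
  have hfε : ∀ s ∈ I, ‖extremalPerturbation (fun u => ∫ τ in t₁..u, l τ) s‖ ≤ 1 :=
    fun s _ => (norm_extremalPerturbation _ s).le
  have hyd := fun t (ht : t ∈ I) =>
    hasDerivWithinAt_tailSolution_of_mem hI hIb hIoo hl hm hm0 hker ht₁ hf hfε ht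
  obtain ⟨y, hy⟩ : ∃ y, y = tailSolution (fun u => ∫ τ in t₁..u, l τ)
      (fun u => ∫ τ in t₁..u, (m τ : ℂ)) b (extremalPerturbation fun u => ∫ τ in t₁..u, l τ) :=
    ⟨_, rfl⟩
  rw [← hy] at hyd
  obtain ⟨x, hx, hyx⟩ := hK.2 1 one_pos (-y)
    (fun t => !![l t, (m t : ℂ); 0, l t] *ᵥ -y t
      + extremalPerturbation (fun u => ∫ τ in t₁..u, l τ) t)
    (fun t ht => (hyd t ht).neg.congr_deriv (by rw [mulVec_neg]; abel))
    ((hl.triangular_mulVec (Complex.continuous_ofReal.comp_continuousOn hm)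
      fun t ht => (hyd t ht).continuousWithinAt.neg).add hf)
    (fun t ht => by simpa only [Pi.neg_apply, add_sub_cancel_left] using hfε t ht)
  have hyκ : ∀ t ∈ I, ‖y t‖ ≤ kappa21r b l m t := fun t ht => by
    simpa [hy] using norm_tailSolution_le_kappa21r hI hIoo hl hm hm0 hker ht₁ hf hfε ht
  have hx₁ : x t₁ = 0 := eq_zero_of_hasDerivWithinAt_of_norm_le hI hl hm ht₁ hunbdd hx
    (fun t ht => (norm_le_norm_add_norm_sub ((-y) t) (x t)).trans <|
      add_le_add ((norm_neg (y t)).trans_le ((hyκ t ht).trans (hS t ht)))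
        (by simpa using hyx t ht)) ht₁
  calc kappa21r b l m t₁ ≤ ‖y t₁ 0‖ := by
        rw [hy, tailSolution_extremalPerturbation_apply_zero hI hIoo hl hm hm0 hker ht₁,
          Complex.norm_real]
        exact Real.le_norm_self _
    _ ≤ ‖(-y) t₁ - x t₁‖ := by
        rw [hx₁, sub_zero, Pi.neg_apply, norm_neg]
        exact norm_le_pi_norm _ 0
    _ ≤ K := by simpa using hyx t₁ ht₁

include hI hIoo hl hm hm0 hker in
theorem kappa21r_pos (ht : t ∈ I) (htb : (t : EReal) < b) : 0 < kappa21r b l m t := by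
  have hpos : ∀ s ∈ realIoo t b,
      0 < (1 + ∫ τ in t..s, m τ) * Real.exp (-∫ τ in t..s, (l τ).re) := fun s hs => by
    have h := eqOn_kappa21r_integrand hI hIoo hl hm hm0 ht ht hs
    simp only at h
    rw [← h]
    positivity
  obtain ⟨r, htr, hrb⟩ := EReal.exists_rat_btwn_of_lt htb
  change 0 < ∫ s in realIoo t b, _
  rw [setIntegral_pos_iff_support_of_nonneg_ae
    ((ae_restrict_iff' measurableSet_realIoo).2 (ae_of_all _ fun s hs => (hpos s hs).le))
    (hker t ht)]
  calc (0 : ENNReal) < volume (Ioo t (r : ℝ)) := by simpa using htr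
    _ ≤ _ := by
      refine measure_mono fun s hs => ?_
      have hs' : s ∈ realIoo t b := ⟨hs.1, (EReal.coe_lt_coe_iff.2 hs.2).trans hrb⟩
      exact ⟨(hpos s hs').ne', hs'⟩

end TriangularSystem

theorem statement12 (a b : EReal) (hab : a < b) (I : Set ℝ)
    (hI1 : ∀ x : ℝ, a < (x : EReal) → (x : EReal) < b → x ∈ I)
    (hI2 : ∀ x ∈ I, a ≤ (x : EReal) ∧ (x : EReal) ≤ b)
    (l : ℝ → ℂ) (m : ℝ → ℝ) (hl : ContinuousOn l I) (hm : ContinuousOn m I)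
    (hm0 : ∀ t ∈ I, 0 ≤ m t)
    (hker : ∀ t ∈ I, IntegrableOn
      (fun s => (1 + ∫ τ in t..s, m τ) * Real.exp (-∫ τ in t..s, (l τ).re))
      {s : ℝ | t < s ∧ (s : EReal) < b})
    (hbdd : BddAbove (kappa21r b l m '' I))
    (hlim : ∀ t₀ : ℝ, a < (t₀ : EReal) → (t₀ : EReal) < b →
        Tendsto (fun t => ∫ s in t₀..t, (l s).re)
          (Filter.comap (fun x : ℝ => (x : EReal)) (nhdsWithin b (Iio b))) atTop) :
    UlamStable2C I (fun t => !![l t, (m t : ℂ); 0, l t]) (sSup (kappa21r b l m '' I)) ∧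
    ∀ K : ℝ, UlamStable2C I (fun t => !![l t, (m t : ℂ); 0, l t]) K → sSup (kappa21r b l m '' I) ≤ K := by
  have hI := ordConnected_of_forall_ereal hI1 hI2
  have hIb : ∀ t ∈ I, (t : EReal) ≤ b := fun t ht => (hI2 t ht).2
  have hIoo := fun t (ht : t ∈ I) => realIoo_subset_of_forall_ereal hI1 hI2 ht
  obtain ⟨r, har, hrb⟩ := EReal.exists_rat_btwn_of_lt hab
  have ht₀ : (r : ℝ) ∈ I := hI1 r har hrb
  have hκ : ∀ t ∈ I, kappa21r b l m t ≤ sSup (kappa21r b l m '' I) := fun t ht =>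
    le_csSup hbdd (mem_image_of_mem _ ht)
  refine ⟨⟨(kappa21r_pos hI hIoo hl hm hm0 hker ht₀ hrb).trans_le (hκ _ ht₀),
    fun ε _ φ φd hφ hφd hφε => ?_⟩, fun K hK => ?_⟩
  · obtain ⟨x, hx, hφx⟩ := exists_solution_norm_sub_le hI hIb hIoo hl hm hm0 hker ht₀ hφ hφd hφε
    exact ⟨x, hx, fun t ht => (hφx t ht).trans (by rw [mul_comm]; gcongr; exact hκ t ht)⟩
  · exact csSup_le (Nonempty.image _ ⟨_, ht₀⟩) (forall_mem_image.2 fun t ht =>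
      kappa21r_le_of_ulamStable hI hIb hIoo hl hm hm0 hker ht
        (exists_le_re_integral_of_tendsto hI1 hI hl har hrb (hlim _ har hrb) ht) hκ hK)
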